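/- In U(O), for all i ∈ ℤ≥0, k ∈ ℤ≥0, j,l ∈ ℕ+: Λ^Γ_{j,l,i} D_{k,1}^{Γ,+}(j,l) = D_{k,1}^{Γ,+}(j,l) Λ^Γ_{j,l,i} − 2 D_{k+1,1}^{Γ,+}(j,l) Λ^Γ_{j,l,i−1} + D_{k+2,1}^{Γ,+}(j,l) Λ^Γ_{j,l,i−2}, with the convention Λ^Γ_{j,l,m} = 0 for m < 0 and Λ^Γ_{j,l,0} = 1. -/

import Mathlib

open Finset

noncomputable section

/- Setting: `A` plays the role of the universal enveloping algebra `U(O)` of the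
Onsager algebra.  `X m = x_m^{Γ,+}`, `Y m = x_m^{Γ,-}`, `H m = h_m^Γ` (indexed by `ℤ`
via the conventions `x_{-m}^{Γ,±} = -x_m^{Γ,±}`, `x_0^{Γ,±} = 0`, `h_{-m}^Γ = h_m^Γ`),
and the Lie brackets of `O` are imposed as commutator relations. -/
variable {A : Type*} [Ring A] [Algebra ℂ A]

/-- `Λ^Γ_{j,l,1} = -(h^Γ_{j+l} - h^Γ_{j-l})`. -/
def Lam1 (H : ℤ → A) (j l : ℤ) : A := -(H (j + l) - H (j - l))

/-- `D^{Γ,+}_{u,1}(j,l)`. -/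
def Dp (X H : ℤ → A) (j l : ℤ) : ℕ → A
  | 0 => X j
  | u + 1 => ((1 : ℂ) / 2) • ⁅Dp X H j l u, Lam1 H j l⁆

/-- `D^{Γ,-}_{u,1}(j,l)`. -/
def Dm (Y H : ℤ → A) (j l : ℤ) : ℕ → A
  | 0 => Y l
  | u + 1 => (-((1 : ℂ) / 2)) • ⁅Dm Y H j l u, Lam1 H j l⁆

/-- `p^Γ_s(j,l) = [x_j^{Γ,+}, D^{Γ,-}_{s-1,1}(j,l)]`. -/
def pG (X Y H : ℤ → A) (j l : ℤ) (s : ℕ) : A := ⁅X j, Dm Y H j l (s - 1)⁆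

/-- `Λ^Γ_{j,l,n}`, via the recursion `n Λ_n = -∑_{i=1}^n p_i Λ_{n-i}` equivalent to the
exponential generating series definition. -/
def Lam (X Y H : ℤ → A) (j l : ℤ) : ℕ → A
  | 0 => 1
  | n + 1 =>
      (-(((n : ℂ) + 1)⁻¹)) •
        ∑ i ∈ Finset.range (n + 1), pG X Y H j l (i + 1) * Lam X Y H j l (n - i)
  decreasing_by omega

/-- `D^{Γ,+}_{u,v}(j,l)`. -/
def DvP (X H : ℤ → A) (j l : ℤ) : ℕ → ℕ → A
  | u, 0 => if u = 0 then 1 else 0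
  | u, v + 1 =>
      (((v : ℂ) + 1)⁻¹) • ∑ i ∈ Finset.range (u + 1), Dp X H j l i * DvP X H j l (u - i) v

/-- `D^{Γ,-}_{u,v}(j,l)`. -/
def DvM (Y H : ℤ → A) (j l : ℤ) : ℕ → ℕ → A
  | u, 0 => if u = 0 then 1 else 0
  | u, v + 1 =>
      (((v : ℂ) + 1)⁻¹) • ∑ i ∈ Finset.range (u + 1), Dm Y H j l i * DvM Y H j l (u - i) v

/-- `Λ^Γ_{j,l,m}` extended to `m ∈ ℤ` by `Λ^Γ_{j,l,m} = 0` for `m < 0`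
(and `Λ^Γ_{j,l,0} = 1` by definition of `Lam`). -/
def LamZ (X Y H : ℤ → A) (j l : ℤ) (m : ℤ) : A :=
  if 0 ≤ m then Lam X Y H j l m.toNat else 0

/-!
Write `S` for the shift `D_u ↦ D_{u+1}`. The relation `[p_s, D_u] = 2 D_{u+s}` says that `ad p_s`
acts on the `D_u` as `2 Sˢ`, so conjugation by `Λ(t) = exp(-∑ p_s tˢ / s)` acts as
`exp(-2 ∑ Sˢ tˢ / s) = (1 - S t)²`, i.e. `Λ(t) D_k = (D_k - 2 t D_{k+1} + t² D_{k+2}) Λ(t)`.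
Without generating series: multiply Newton's recursion `n Λ_n = -∑ p_i Λ_{n-i}` on the right by
`D_k`, move `D_k` to the left through each `Λ_{n-i}` by induction and through each `p_i` by the
relation; the extra terms form a second difference that telescopes.

The relation itself holds because `p_{a+b+1} = [D⁺_a, D⁻_b]`, while the `p_s` and `Λ_{j,l,1}`
lie in the abelian span of the `h_m`, so the Jacobi identity moves `Λ_{j,l,1}` from one factor
to the other.
-/

section Brackets

attribute [local instance] LieRing.ofAssociativeRing

open Submodule Set

theorem Submodule.lie_mem_of_mem_span {R L : Type*} [CommRing R] [LieRing L] [LieAlgebra R L]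
    {s t : Set L} {p : Submodule R L} (h : ∀ x ∈ s, ∀ y ∈ t, ⁅x, y⁆ ∈ p) {x y : L}
    (hx : x ∈ span R s) (hy : y ∈ span R t) : ⁅x, y⁆ ∈ p := by
  induction hx, hy using span_induction₂ with
  | mem_mem x y hx hy => exact h x hx y hy
  | zero_left => simp
  | zero_right => simp
  | add_left _ _ _ _ _ _ h₁ h₂ => rw [add_lie]; exact add_mem h₁ h₂
  | add_right _ _ _ _ _ _ h₁ h₂ => rw [lie_add]; exact add_mem h₁ h₂
  | smul_left c _ _ _ _ h => rw [smul_lie]; exact smul_mem _ c h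
  | smul_right c _ _ _ _ h => rw [lie_smul]; exact smul_mem _ c h

structure OnsagerRelations {R : Type*} [Ring R] (X Y H : ℤ → R) : Prop where
  X_neg : ∀ m, X (-m) = -X m
  lie_X_Y : ∀ j l, ⁅X j, Y l⁆ = H (j + l) - H (j - l)
  lie_H_X : ∀ k j, ⁅H k, X j⁆ = 2 • (X (j + k) - X (k - j))
  lie_H_Y : ∀ k l, ⁅H k, Y l⁆ = -(2 • (Y (l + k) + Y (l - k)))
  lie_H_H : ∀ k m, ⁅H k, H m⁆ = 0

namespace OnsagerRelations

theorem lie_lie_X_X_Y_eq_zero {R : Type*} [Ring R] {X Y H : ℤ → R} (hR : OnsagerRelations X Y H)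
    (a b c : ℤ) : ⁅⁅X a, X b⁆, Y c⁆ = 0 := by
  have hXH : ∀ a r, ⁅X a, H r⁆ = 2 • (X (r - a) - X (a + r)) := fun a r => by
    rw [← lie_skew, hR.lie_H_X, ← smul_neg, neg_sub]
  rw [lie_lie, hR.lie_X_Y, hR.lie_X_Y, lie_sub, lie_sub, hXH, hXH, hXH, hXH,
    show b + c - a = -(a - c - b) by ring, show b - c - a = -(a + c - b) by ring, hR.X_neg,
    hR.X_neg, show b + (a + c) = a + (b + c) by ring, show b + (a - c) = a + (b - c) by ring]
  abel

end OnsagerRelations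

variable {X Y H : ℤ → A} (j l : ℤ)

theorem Lam1_mem_span : Lam1 H j l ∈ span ℂ (range H) :=
  neg_mem (sub_mem (subset_span (mem_range_self _)) (subset_span (mem_range_self _)))

theorem lie_Dp_Lam1 (u : ℕ) :
    ⁅Dp X H j l u, Lam1 H j l⁆ = (2 : ℂ) • Dp X H j l (u + 1) := by
  rw [Dp, smul_smul]; norm_num

theorem lie_Lam1_Dm (u : ℕ) :
    ⁅Lam1 H j l, Dm Y H j l u⁆ = (2 : ℂ) • Dm Y H j l (u + 1) := by
  rw [Dm, smul_smul, ← lie_skew]; norm_num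

namespace OnsagerRelations

variable {j l}

theorem lie_eq_zero_of_mem_span_H (hR : OnsagerRelations X Y H) {v w : A}
    (hv : v ∈ span ℂ (range H)) (hw : w ∈ span ℂ (range H)) : ⁅v, w⁆ = 0 := by
  simpa using lie_mem_of_mem_span (p := ⊥)
    (by rintro _ ⟨k, rfl⟩ _ ⟨m, rfl⟩; simp [hR.lie_H_H]) hv hw

theorem lie_mem_span_X (hR : OnsagerRelations X Y H) {v w : A} (hv : v ∈ span ℂ (range X))
    (hw : w ∈ span ℂ (range H)) : ⁅v, w⁆ ∈ span ℂ (range X) := by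
  refine lie_mem_of_mem_span ?_ hv hw
  rintro _ ⟨a, rfl⟩ _ ⟨r, rfl⟩
  rw [← lie_skew, hR.lie_H_X]
  exact neg_mem <| nsmul_mem
    (sub_mem (subset_span (mem_range_self _)) (subset_span (mem_range_self _))) 2

theorem lie_mem_span_Y (hR : OnsagerRelations X Y H) {v w : A} (hv : v ∈ span ℂ (range Y))
    (hw : w ∈ span ℂ (range H)) : ⁅v, w⁆ ∈ span ℂ (range Y) := by
  refine lie_mem_of_mem_span ?_ hv hw
  rintro _ ⟨b, rfl⟩ _ ⟨r, rfl⟩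
  rw [← lie_skew, hR.lie_H_Y]
  exact neg_mem <| neg_mem <| nsmul_mem
    (add_mem (subset_span (mem_range_self _)) (subset_span (mem_range_self _))) 2

theorem lie_mem_span_H (hR : OnsagerRelations X Y H) {v w : A} (hv : v ∈ span ℂ (range X))
    (hw : w ∈ span ℂ (range Y)) : ⁅v, w⁆ ∈ span ℂ (range H) := by
  refine lie_mem_of_mem_span ?_ hv hw
  rintro _ ⟨a, rfl⟩ _ ⟨b, rfl⟩
  rw [hR.lie_X_Y]
  exact sub_mem (subset_span (mem_range_self _)) (subset_span (mem_range_self _))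

theorem Dp_mem_span (hR : OnsagerRelations X Y H) (u : ℕ) :
    Dp X H j l u ∈ span ℂ (range X) := by
  induction u with
  | zero => exact subset_span (mem_range_self j)
  | succ u ih => exact smul_mem _ _ (hR.lie_mem_span_X ih (Lam1_mem_span j l))

theorem Dm_mem_span (hR : OnsagerRelations X Y H) (u : ℕ) :
    Dm Y H j l u ∈ span ℂ (range Y) := by
  induction u with
  | zero => exact subset_span (mem_range_self l)
  | succ u ih => exact smul_mem _ _ (hR.lie_mem_span_Y ih (Lam1_mem_span j l))

theorem pG_mem_span (hR : OnsagerRelations X Y H) (s : ℕ) :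
    pG X Y H j l s ∈ span ℂ (range H) :=
  hR.lie_mem_span_H (subset_span (mem_range_self j)) (hR.Dm_mem_span _)

theorem lie_Dp_Dm (hR : OnsagerRelations X Y H) (a b : ℕ) :
    ⁅Dp X H j l a, Dm Y H j l b⁆ = pG X Y H j l (a + b + 1) := by
  induction a generalizing b with
  | zero => rw [Dp, pG, zero_add, Nat.add_sub_cancel]
  | succ a ih =>
    rw [Dp, smul_lie, lie_lie, lie_Lam1_Dm, ih,
      hR.lie_eq_zero_of_mem_span_H (Lam1_mem_span j l) (hR.pG_mem_span _), sub_zero, lie_smul, ih,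
      smul_smul, show a + (b + 1) + 1 = a + 1 + b + 1 by omega]
    norm_num

theorem lie_lie_X_Y_eq_zero (hR : OnsagerRelations X Y H) {v : A} (hv : v ∈ span ℂ (range X))
    (b c : ℤ) : ⁅⁅v, X b⁆, Y c⁆ = 0 := by
  induction hv using span_induction with
  | mem x hx => obtain ⟨a, rfl⟩ := hx; exact hR.lie_lie_X_X_Y_eq_zero a b c
  | zero => simp
  | add x y _ _ hx hy => rw [add_lie, add_lie, hx, hy, add_zero]
  | smul c' x _ hx => rw [smul_lie, smul_lie, hx, smul_zero]

theorem lie_pG_X (hR : OnsagerRelations X Y H) (s : ℕ) :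
    ⁅pG X Y H j l (s + 1), X j⁆ = (2 : ℂ) • Dp X H j l (s + 1) := by
  have hYX : ⁅Y l, X j⁆ = Lam1 H j l := by rw [← lie_skew, hR.lie_X_Y, Lam1]
  have hpG : pG X Y H j l (s + 1) = ⁅Dp X H j l s, Y l⁆ := (hR.lie_Dp_Dm s 0).symm
  rw [hpG, lie_lie, hYX, ← lie_skew (Y l), hR.lie_lie_X_Y_eq_zero (hR.Dp_mem_span s), neg_zero,
    sub_zero, lie_Dp_Lam1]

theorem lie_pG_Dp (hR : OnsagerRelations X Y H) (s u : ℕ) :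
    ⁅pG X Y H j l (s + 1), Dp X H j l u⁆ = 2 • Dp X H j l (u + s + 1) := by
  rw [← ofNat_smul_eq_nsmul (R := ℂ)]
  induction u with
  | zero => rw [zero_add, Dp, hR.lie_pG_X]
  | succ u ih =>
    rw [Dp, lie_smul, leibniz_lie, ih,
      hR.lie_eq_zero_of_mem_span_H (hR.pG_mem_span _) (Lam1_mem_span j l), lie_zero, add_zero,
      smul_lie, lie_Dp_Lam1, smul_smul, smul_smul, show u + s + 1 + 1 = u + 1 + s + 1 by omega]
    norm_num

end OnsagerRelations

end Brackets

theorem Finset.sum_range_second_diff {M : Type*} [AddCommGroup M] (f : ℕ → M) {n : ℕ}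
    (hn : f n = 0) (hn1 : f (n + 1) = 0) :
    ∑ i ∈ range n, (f i - 2 • f (i + 1) + f (i + 2)) = f 0 - f 1 := by
  have hsplit : ∀ i,
      f i - 2 • f (i + 1) + f (i + 2) = (f i - f (i + 1)) - (f (i + 1) - f (i + 2)) :=
    fun i => by abel
  simp only [hsplit, sum_sub_distrib, sum_range_sub' f, sum_range_sub' (fun i => f (i + 1)), hn,
    hn1, sub_zero, zero_add]

section NewtonRecursion

variable {𝕜 B : Type*} [Field 𝕜] [Ring B] [Algebra 𝕜 B]
  {p D : ℕ → B} {Λ : ℤ → B}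

theorem sum_range_mul_eq_neg_smul (hneg : ∀ m < 0, Λ m = 0)
    (hrec : ∀ n : ℕ, (n : 𝕜) • Λ n = -∑ i ∈ range n, p (i + 1) * Λ (n - 1 - i))
    {m : ℤ} {N : ℕ} (hmN : m ≤ N) :
    ∑ i ∈ range N, p (i + 1) * Λ (m - 1 - i) = -((m : 𝕜) • Λ m) := by
  rcases lt_or_ge m 0 with hm | hm
  · rw [hneg m hm, smul_zero, neg_zero]
    exact sum_eq_zero fun i _ => by rw [hneg _ (by omega), mul_zero]
  · lift m to ℕ using hm
    rw [← sum_range_add_sum_Ico _ (by exact_mod_cast hmN), Int.cast_natCast, hrec, neg_neg,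
      add_eq_left]
    exact sum_eq_zero fun i hi => by rw [hneg _ (by grind), mul_zero]

theorem mul_eq_of_lie_eq_two_shift [CharZero 𝕜] (hneg : ∀ m < 0, Λ m = 0) (hzero : Λ 0 = 1)
    (hrec : ∀ n : ℕ, (n : 𝕜) • Λ n = -∑ i ∈ range n, p (i + 1) * Λ (n - 1 - i))
    (hpD : ∀ s u, ⁅p (s + 1), D u⁆ = 2 • D (u + s + 1)) (n k : ℕ) :
    Λ n * D k = D k * Λ n - 2 • (D (k + 1) * Λ (n - 1)) + D (k + 2) * Λ (n - 2) := by
  induction n using Nat.strong_induction_on generalizing k with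
  | _ n ih =>
  rcases Nat.eq_zero_or_pos n with rfl | hn
  · simp [hneg, hzero]
  set f : ℕ → B := fun i => D (k + i + 1) * Λ (n - 1 - i) with hf
  have hterm : ∀ i ∈ range n, p (i + 1) * Λ (n - 1 - i) * D k =
      D k * (p (i + 1) * Λ (n - 1 - i)) - 2 • (D (k + 1) * (p (i + 1) * Λ (n - 1 - 1 - i)))
        + D (k + 2) * (p (i + 1) * Λ (n - 2 - 1 - i))
        + 2 • (f i - 2 • f (i + 1) + f (i + 2)) := by
    intro i hi
    rw [mem_range] at hi
    have hcast : ((n - 1 - i : ℕ) : ℤ) = n - 1 - i := by omega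
    have hpD' : ∀ u, p (i + 1) * D u = D u * p (i + 1) + 2 • D (u + i + 1) := fun u => by
      rw [← hpD, Ring.lie_def]; abel
    rw [mul_assoc, ← hcast, ih _ (by omega), hcast, mul_add, mul_sub, mul_smul_comm,
      ← mul_assoc, ← mul_assoc, ← mul_assoc, hpD', hpD', hpD']
    simp only [hf, add_mul, smul_mul_assoc, mul_assoc]
    push_cast
    ring_nf
    module
  have hsecond : ∑ i ∈ range n, (f i - 2 • f (i + 1) + f (i + 2)) = f 0 - f 1 :=
    sum_range_second_diff f (by simp [hf, hneg]) (by simp [hf, hneg])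
  have hn' : (n : 𝕜) ≠ 0 := by exact_mod_cast hn.ne'
  apply smul_right_injective B hn'
  dsimp only
  rw [← smul_mul_assoc, hrec, neg_mul, sum_mul, sum_congr rfl hterm]
  simp only [sum_add_distrib, sum_sub_distrib, ← smul_sum, ← mul_sum, hsecond]
  rw [sum_range_mul_eq_neg_smul (𝕜 := 𝕜) hneg hrec (by omega),
    sum_range_mul_eq_neg_smul (𝕜 := 𝕜) hneg hrec (by omega),
    sum_range_mul_eq_neg_smul (𝕜 := 𝕜) hneg hrec (by omega)]
  simp only [hf]
  push_cast
  rw [sub_zero, show (n : ℤ) - 1 - 1 = n - 2 by ring, show k + 1 + 1 = k + 2 by rfl]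
  simp only [mul_neg, mul_smul_comm]
  module

end NewtonRecursion

section LamZ

variable {X Y H : ℤ → A} (j l : ℤ)

theorem LamZ_natCast (n : ℕ) : LamZ X Y H j l n = Lam X Y H j l n := by
  simp [LamZ]

theorem LamZ_of_neg {m : ℤ} (hm : m < 0) : LamZ X Y H j l m = 0 :=
  if_neg (not_le.mpr hm)

theorem LamZ_zero : LamZ X Y H j l 0 = 1 := by
  rw [← Nat.cast_zero, LamZ_natCast, Lam]

theorem natCast_smul_LamZ (n : ℕ) :
    (n : ℂ) • LamZ X Y H j l n =
      -∑ i ∈ range n, pG X Y H j l (i + 1) * LamZ X Y H j l (n - 1 - i) := by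
  cases n with
  | zero => simp
  | succ n =>
    have hshift : ∀ i ∈ range (n + 1),
        LamZ X Y H j l ((n + 1 : ℕ) - 1 - i) = Lam X Y H j l (n - i) := fun i hi => by
      rw [show ((n + 1 : ℕ) : ℤ) - 1 - i = ((n - i : ℕ) : ℤ) by grind, LamZ_natCast]
    rw [sum_congr rfl fun i hi => by rw [hshift i hi], LamZ_natCast, Lam, smul_smul]
    push_cast
    rw [mul_neg, mul_inv_cancel₀ (Nat.cast_add_one_ne_zero n), neg_one_smul]

end LamZ

theorem Lam_mul_Dp_general (X Y H : ℤ → A)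
    (hXneg : ∀ m : ℤ, X (-m) = -X m)
    (hXY : ∀ j l : ℤ, ⁅X j, Y l⁆ = H (j + l) - H (j - l))
    (hHX : ∀ k j : ℤ, ⁅H k, X j⁆ = 2 • (X (j + k) - X (k - j)))
    (hHY : ∀ k l : ℤ, ⁅H k, Y l⁆ = -(2 • (Y (l + k) + Y (l - k))))
    (hHH : ∀ k m : ℤ, ⁅H k, H m⁆ = 0)
    (i k : ℕ) (j l : ℕ+) :
    LamZ X Y H ((j : ℕ) : ℤ) ((l : ℕ) : ℤ) (i : ℤ) *
        Dp X H ((j : ℕ) : ℤ) ((l : ℕ) : ℤ) k =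
      Dp X H ((j : ℕ) : ℤ) ((l : ℕ) : ℤ) k * LamZ X Y H ((j : ℕ) : ℤ) ((l : ℕ) : ℤ) (i : ℤ)
        - 2 • (Dp X H ((j : ℕ) : ℤ) ((l : ℕ) : ℤ) (k + 1) *
            LamZ X Y H ((j : ℕ) : ℤ) ((l : ℕ) : ℤ) ((i : ℤ) - 1))
        + Dp X H ((j : ℕ) : ℤ) ((l : ℕ) : ℤ) (k + 2) *
            LamZ X Y H ((j : ℕ) : ℤ) ((l : ℕ) : ℤ) ((i : ℤ) - 2) := by
  have hR : OnsagerRelations X Y H := ⟨hXneg, hXY, hHX, hHY, hHH⟩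
  exact mul_eq_of_lie_eq_two_shift (𝕜 := ℂ) (fun _ => LamZ_of_neg _ _) (LamZ_zero _ _)
    (natCast_smul_LamZ _ _) hR.lie_pG_Dp i k

/-- `Λ^Γ_{j,l,i} D^{Γ,+}_{k,1} = D^{Γ,+}_{k,1} Λ^Γ_{j,l,i} - 2 D^{Γ,+}_{k+1,1} Λ^Γ_{j,l,i-1}
  + D^{Γ,+}_{k+2,1} Λ^Γ_{j,l,i-2}`. -/
theorem Lam_mul_Dp (X Y H : ℤ → A)
    (hXneg : ∀ m : ℤ, X (-m) = -X m) (hX0 : X 0 = 0)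
    (hYneg : ∀ m : ℤ, Y (-m) = -Y m) (hY0 : Y 0 = 0)
    (hHneg : ∀ m : ℤ, H (-m) = H m)
    (hXY : ∀ j l : ℤ, ⁅X j, Y l⁆ = H (j + l) - H (j - l))
    (hHX : ∀ k j : ℤ, ⁅H k, X j⁆ = 2 • (X (j + k) - X (k - j)))
    (hHY : ∀ k l : ℤ, ⁅H k, Y l⁆ = -(2 • (Y (l + k) + Y (l - k))))
    (hHH : ∀ k m : ℤ, ⁅H k, H m⁆ = 0)
    (i k : ℕ) (j l : ℕ+) :
    LamZ X Y H ((j : ℕ) : ℤ) ((l : ℕ) : ℤ) (i : ℤ) *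
        Dp X H ((j : ℕ) : ℤ) ((l : ℕ) : ℤ) k =
      Dp X H ((j : ℕ) : ℤ) ((l : ℕ) : ℤ) k * LamZ X Y H ((j : ℕ) : ℤ) ((l : ℕ) : ℤ) (i : ℤ)
        - 2 • (Dp X H ((j : ℕ) : ℤ) ((l : ℕ) : ℤ) (k + 1) *
            LamZ X Y H ((j : ℕ) : ℤ) ((l : ℕ) : ℤ) ((i : ℤ) - 1))
        + Dp X H ((j : ℕ) : ℤ) ((l : ℕ) : ℤ) (k + 2) *
            LamZ X Y H ((j : ℕ) : ℤ) ((l : ℕ) : ℤ) ((i : ℤ) - 2) :=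
  Lam_mul_Dp_general X Y H hXneg hXY hHX hHY hHH i k j l
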